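/- arXiv:0907.5527 — 2 statements merged into one kernel-verified Lean document; each statement's English description precedes it below -/
import Mathlib

section
/- Let α, β be ordinals below ω^ω and n, m natural numbers. Then: (1) if α ≻ₙ β then either α ≻_{n+1} β+1 or α = β+1; (2) if α ≻ₙ β and n ≥ m then H_α(n) > H_β(m); (3) if n > m then H_α(n) > H_α(m); (4) if α, β > 0 and the least exponent occurring in the Cantor normal form of α is greater than or equal to the greatest exponent occurring in the Cantor normal form of β, then H_{α+β}(n) = H_α(H_β(n)). -/
/-!  Ordinals below `ω^ω` are represented by their Cantor normal forms: a list
`l : List ℕ` represents the ordinal `Σᵢ ω^i · l[i]` (little-endian coefficients). -/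

/-- The list represents the ordinal `0`. -/
def isZero (l : List ℕ) : Prop := ∀ a ∈ l, a = 0

instance (l : List ℕ) : Decidable (isZero l) :=
  inferInstanceAs (Decidable (∀ a ∈ l, a = 0))

/-- The fundamental sequence: `fs x l` is (the representation of) `α[x]` where `α` is
represented by `l`.  It implements `0[x] = 0`, `(β+1)[x] = β` and
`(β + ω^{γ+1}·k)[x] = β + ω^{γ+1}·(k−1) + ω^γ·(x+1)`. -/
def fs (x : ℕ) : List ℕ → List ℕ
  | [] => []
  | (a+1) :: l => a :: l
  | [0] => [0]
  | 0 :: (k+1) :: l => (x+1) :: k :: l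
  | 0 :: 0 :: l => 0 :: fs x (0 :: l)
termination_by l => l.length

/-- The ordinal represented by a list of CNF coefficients. -/
noncomputable def toOrd : List ℕ → Ordinal.{0}
  | [] => 0
  | a :: l => Ordinal.omega0 * toOrd l + a

theorem toOrd_fs_lt (x : ℕ) : ∀ l : List ℕ, ¬ isZero l → toOrd (fs x l) < toOrd l := by
  have helper : ∀ (B : Ordinal) (x k : ℕ),
      Ordinal.omega0 * (B + (k : Ordinal)) + ((x + 1 : ℕ) : Ordinal) <
        Ordinal.omega0 * (B + ((k + 1 : ℕ) : Ordinal)) := by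
    intro B x k
    have e : B + ((k + 1 : ℕ) : Ordinal) = Order.succ (B + (k : Ordinal)) := by
      push_cast
      rw [← add_assoc, Ordinal.add_one_eq_succ]
    rw [e, Ordinal.mul_succ]
    exact (add_lt_add_iff_left _).2 (Ordinal.natCast_lt_omega0 (x + 1))
  intro l
  induction l using fs.induct with
  | case1 =>
      intro h
      exact absurd (by simp [isZero]) h
  | case2 a l =>
      intro _
      simp only [fs, toOrd]
      exact (add_lt_add_iff_left _).2 (by exact_mod_cast Nat.lt_succ_self a)
  | case3 =>
      intro h
      exact absurd (by simp [isZero]) h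
  | case4 k l =>
      intro _
      simp only [fs, toOrd]
      rw [Nat.cast_zero, add_zero]
      exact helper (Ordinal.omega0 * toOrd l) x k
  | case5 l ih =>
      intro h
      have h' : ¬ isZero (0 :: l) := by
        intro hz
        apply h
        intro a ha
        rcases List.mem_cons.mp ha with rfl | ha'
        · rfl
        · exact hz a ha'
      have ih' := ih h'
      simp only [fs, toOrd, Nat.cast_zero, add_zero] at ih' ⊢
      exact mul_lt_mul_of_pos_left ih' Ordinal.omega0_pos

local instance : WellFoundedRelation Ordinal.{0} := ⟨(· < ·), Ordinal.lt_wf⟩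

/-- The Hardy functions: `H_0(x) = x` and `H_α(x) = H_{α[x]}(x+1)` for `α > 0`. -/
def hardy (l : List ℕ) (x : ℕ) : ℕ :=
  if h : isZero l then x else hardy (fs x l) (x + 1)
termination_by toOrd l
decreasing_by exact toOrd_fs_lt x l h

/-- The descent relation `α ≻ₓ β` along fundamental sequences (for nonzero `α`):
`α ≻ₓ β` iff `α[x] = β` or `α[x] ≻ₓ β`. -/
inductive FSdesc (x : ℕ) : List ℕ → List ℕ → Prop
  | base {α : List ℕ} : ¬ isZero α → FSdesc x α (fs x α)
  | step {α β : List ℕ} : ¬ isZero α → FSdesc x (fs x α) β → FSdesc x α β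

/-- The successor `β + 1` on CNF coefficient lists. -/
def succC : List ℕ → List ℕ
  | [] => [1]
  | a :: l => (a + 1) :: l

/-! The Hardy function only depends on the ordinal represented, so we may work with any
representation. Statements (2) and (3) are proved together by induction on `α`: since
`H_α(m) = H_{α[m]}(m+1)` and `α ≻_{m+1} α[m]` (a consequence of (1)), strict monotonicity of
`H_α` reduces to (2) for the smaller ordinal `α[m+1]`. Under the exponent condition the
fundamental sequence of `α + β` only touches the summand `β`, i.e. `(α+β)[x] = α + β[x]`,
which gives (4) by induction on `β`. -/

section Representation

@[simp] lemma isZero_nil : isZero ([] : List ℕ) := List.forall_mem_nil _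

@[simp] lemma isZero_cons {a : ℕ} {l : List ℕ} : isZero (a :: l) ↔ a = 0 ∧ isZero l :=
  List.forall_mem_cons

lemma isZero_iff_getD {l : List ℕ} : isZero l ↔ ∀ j, l.getD j 0 = 0 := by
  induction l with
  | nil => simp
  | cons a l ih =>
    rw [isZero_cons, ih]
    refine ⟨fun ⟨ha, hl⟩ j => ?_, fun h => ⟨h 0, fun j => h (j + 1)⟩⟩
    cases j with
    | zero => exact ha
    | succ j => exact hl j

lemma exists_getD_ne_zero {l : List ℕ} (h : ¬ isZero l) : ∃ j, l.getD j 0 ≠ 0 := by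
  simpa [isZero_iff_getD] using h

@[simp] lemma toOrd_nil : toOrd [] = 0 := rfl

@[simp] lemma toOrd_cons (a : ℕ) (l : List ℕ) :
    toOrd (a :: l) = Ordinal.omega0 * toOrd l + a := rfl

lemma toOrd_eq_tail (l : List ℕ) : toOrd l = Ordinal.omega0 * toOrd l.tail + l.getD 0 0 := by
  cases l <;> simp

lemma toOrd_eq_zero_iff {l : List ℕ} : toOrd l = 0 ↔ isZero l := by
  induction l with
  | nil => simp
  | cons a l ih => simp [Ordinal.omega0_ne_zero, ih, and_comm]

lemma toOrd_cons_inj {a b : ℕ} {l m : List ℕ} :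
    toOrd (a :: l) = toOrd (b :: m) ↔ a = b ∧ toOrd l = toOrd m := by
  refine ⟨fun h => ⟨?_, ?_⟩, fun ⟨hab, hlm⟩ => by rw [toOrd_cons, toOrd_cons, hab, hlm]⟩
  · have := congrArg (· % Ordinal.omega0) h
    simpa [Ordinal.mul_add_mod_self, Ordinal.mod_eq_of_lt (Ordinal.natCast_lt_omega0 _)]
      using this
  · have := congrArg (· / Ordinal.omega0) h
    simpa [Ordinal.mul_add_div _ Ordinal.omega0_ne_zero,
      Ordinal.div_eq_zero_of_lt (Ordinal.natCast_lt_omega0 _)] using this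

lemma exists_eq_cons_of_toOrd_eq {a : ℕ} {l m : List ℕ} (h : toOrd (a :: l) = toOrd m)
    (hz : ¬ isZero (a :: l)) : ∃ t, m = a :: t ∧ toOrd l = toOrd t := by
  cases m with
  | nil => exact absurd (toOrd_eq_zero_iff.1 h) hz
  | cons b t =>
    obtain ⟨rfl, ht⟩ := toOrd_cons_inj.1 h
    exact ⟨t, rfl, ht⟩

theorem toOrd_induction {P : List ℕ → Prop} (l : List ℕ)
    (ind : ∀ l, (∀ l', toOrd l' < toOrd l → P l') → P l) : P l :=
  (InvImage.wf toOrd Ordinal.lt_wf).induction l ind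

end Representation

section FundamentalSequence

lemma fs_ne_nil (x : ℕ) {l : List ℕ} (h : l ≠ []) : fs x l ≠ [] := by
  induction l using fs.induct <;> simp_all [fs]

lemma toOrd_fs_congr (x : ℕ) {l₁ l₂ : List ℕ} (h : toOrd l₁ = toOrd l₂) (hz : ¬ isZero l₁) :
    toOrd (fs x l₁) = toOrd (fs x l₂) := by
  induction l₁ using fs.induct generalizing l₂ with
  | case1 | case3 => simp at hz
  | case2 a t =>
    obtain ⟨t', rfl, ht⟩ := exists_eq_cons_of_toOrd_eq h hz
    simp [fs, ht]
  | case4 k t =>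
    obtain ⟨t', rfl, ht⟩ := exists_eq_cons_of_toOrd_eq h hz
    obtain ⟨t'', rfl, ht'⟩ := exists_eq_cons_of_toOrd_eq ht (by simp)
    simp [fs, ht']
  | case5 t ih =>
    obtain ⟨t', rfl, ht⟩ := exists_eq_cons_of_toOrd_eq h hz
    obtain ⟨t'', rfl, ht'⟩ := exists_eq_cons_of_toOrd_eq ht (by simpa using hz)
    simp [fs, ih (toOrd_cons_inj.2 ⟨rfl, ht'⟩) (by simpa using hz)]

lemma hardy_of_isZero {l : List ℕ} (h : isZero l) (x : ℕ) : hardy l x = x := by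
  rw [hardy, dif_pos h]

lemma hardy_of_not_isZero {l : List ℕ} (h : ¬ isZero l) (x : ℕ) :
    hardy l x = hardy (fs x l) (x + 1) := by
  rw [hardy, dif_neg h]

theorem hardy_congr {l₁ l₂ : List ℕ} (h : toOrd l₁ = toOrd l₂) : hardy l₁ = hardy l₂ := by
  induction l₁ using toOrd_induction generalizing l₂ with
  | ind l₁ ih =>
    funext x
    by_cases hz : isZero l₁
    · rw [hardy_of_isZero hz, hardy_of_isZero (toOrd_eq_zero_iff.1 (h ▸ toOrd_eq_zero_iff.2 hz))]
    · have hz₂ : ¬ isZero l₂ := fun hz₂ => hz (toOrd_eq_zero_iff.1 (h ▸ toOrd_eq_zero_iff.2 hz₂))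
      rw [hardy_of_not_isZero hz, hardy_of_not_isZero hz₂,
        ih _ (toOrd_fs_lt x l₁ hz) (toOrd_fs_congr x h hz)]

end FundamentalSequence

namespace FSdesc

variable {x : ℕ}

lemma not_isZero {α β : List ℕ} (h : FSdesc x α β) : ¬ isZero α := by
  cases h <;> assumption

lemma eq_fs_or {α β : List ℕ} (h : FSdesc x α β) : β = fs x α ∨ FSdesc x (fs x α) β := by
  cases h with
  | base => exact Or.inl rfl
  | step _ h => exact Or.inr h

lemma trans {α β γ : List ℕ} (h₁ : FSdesc x α β) (h₂ : FSdesc x β γ) : FSdesc x α γ := by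
  induction h₁ with
  | base h => exact .step h h₂
  | step h _ ih => exact .step h (ih h₂)

lemma cons_of_lt {c d : ℕ} (t : List ℕ) (h : d < c) : FSdesc x (c :: t) (d :: t) := by
  induction c with
  | zero => omega
  | succ c ih =>
    have hc : ¬ isZero ((c + 1) :: t) := by simp
    rcases Nat.lt_succ_iff_lt_or_eq.1 h with h | rfl
    · exact .step hc (by simpa [fs] using ih h)
    · simpa [fs] using FSdesc.base (x := x) hc

lemma zero_cons_fs {δ : List ℕ} (h : ¬ isZero δ) : FSdesc x (0 :: δ) (0 :: fs x δ) := by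
  match δ, h with
  | (a + 1) :: l, _ =>
    refine .step (by simp) ?_
    simpa [fs] using cons_of_lt (x := x) (a :: l) x.succ_pos
  | 0 :: l, h => simpa [fs] using FSdesc.base (x := x) (α := 0 :: 0 :: l) (by simpa using h)

lemma zero_cons {δ ε : List ℕ} (h : FSdesc x δ ε) : FSdesc x (0 :: δ) (0 :: ε) := by
  induction h with
  | base h => exact zero_cons_fs h
  | step h _ ih => exact (zero_cons_fs h).trans ih

lemma succC_of_ne_nil {δ : List ℕ} (h : δ ≠ []) : FSdesc x (succC δ) δ := by
  match δ with
  | a :: l =>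
    show FSdesc x ((a + 1) :: l) (a :: l)
    simpa [fs] using FSdesc.base (x := x) (α := (a + 1) :: l) (by simp)

lemma succC_fs_or_eq {α : List ℕ} (h : ¬ isZero α) :
    FSdesc (x + 1) α (succC (fs x α)) ∨ α = succC (fs x α) := by
  induction α using fs.induct with
  | case1 | case3 => simp at h
  | case2 a l => exact Or.inr (by simp [fs, succC])
  | case4 k l => exact Or.inl (by simpa [fs, succC] using FSdesc.base (x := x + 1) h)
  | case5 l ih =>
    left
    obtain ⟨u₀, u, hu⟩ := List.exists_cons_of_ne_nil (fs_ne_nil x (l := 0 :: l) (by simp))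
    have hl : FSdesc (x + 1) (0 :: l) ((u₀ + 1) :: u) := by
      rcases ih (by simpa using h) with h' | h'
      · simpa [hu, succC] using h'
      · simp [hu, succC] at h'
    -- `0 :: 0 :: l ≻ 0 :: (u₀+1) :: u ≻ (x+2) :: u₀ :: u ≻ 1 :: u₀ :: u`
    simp only [fs, hu, succC]
    refine hl.zero_cons.trans (.step (by simp) ?_)
    simpa [fs] using cons_of_lt (x := x + 1) (u₀ :: u) (by omega : 1 < x + 1 + 1)

lemma fs_succ {α : List ℕ} (h : ¬ isZero α) : FSdesc (x + 1) α (fs x α) := by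
  have hne : fs x α ≠ [] := fs_ne_nil x (by rintro rfl; simp at h)
  rcases succC_fs_or_eq h with hd | he
  · exact hd.trans (FSdesc.succC_of_ne_nil hne)
  · have := FSdesc.succC_of_ne_nil (x := x + 1) hne
    rwa [← he] at this

theorem succ_succC_or_eq {α β : List ℕ} (h : FSdesc x α β) :
    FSdesc (x + 1) α (succC β) ∨ α = succC β := by
  induction h with
  | base h => exact succC_fs_or_eq h
  | step h _ ih =>
    rcases ih with hd | he
    · exact Or.inl ((fs_succ h).trans hd)
    · exact Or.inl (he ▸ fs_succ h)

end FSdesc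

theorem strictMono_hardy_and_hardy_lt_of_FSdesc (α : List ℕ) :
    StrictMono (hardy α) ∧ ∀ {n m β}, FSdesc n α β → m ≤ n → hardy β m < hardy α n := by
  induction α using toOrd_induction with
  | ind α ih =>
    by_cases hα : isZero α
    · exact ⟨fun a b h => by simpa [hardy_of_isZero hα] using h, fun h => absurd hα h.not_isZero⟩
    have mono (x : ℕ) : StrictMono (hardy (fs x α)) := (ih _ (toOrd_fs_lt x α hα)).1
    have hlt {n m β} (h : FSdesc n α β) (hmn : m ≤ n) : hardy β m < hardy α n := by
      rw [hardy_of_not_isZero hα]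
      rcases h.eq_fs_or with rfl | h
      · exact mono n (by omega)
      · exact ((ih _ (toOrd_fs_lt n α hα)).2 h hmn).trans (mono n n.lt_succ_self)
    refine ⟨strictMono_nat_of_lt_succ fun m => ?_, hlt⟩
    rw [hardy_of_not_isZero hα m]
    exact hlt (FSdesc.fs_succ hα) le_rfl

section Addition

def ExpDominates (a b : List ℕ) : Prop :=
  ∀ i j, a.getD i 0 ≠ 0 → b.getD j 0 ≠ 0 → j ≤ i

lemma ExpDominates.getD_eq_zero {a b : List ℕ} (h : ExpDominates a b) {i j : ℕ}
    (hj : b.getD j 0 ≠ 0) (hij : i < j) : a.getD i 0 = 0 := by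
  by_contra hi
  exact absurd (h i j hi hj) (by omega)

lemma ExpDominates.tail {a m : List ℕ} {y : ℕ} (h : ExpDominates a (y :: m)) :
    ExpDominates a.tail m := by
  intro i j hi hj
  have := h (i + 1) (j + 1) (by cases a <;> simp_all) (by simpa using hj)
  omega

lemma exists_le_of_getD_fs_ne_zero (x : ℕ) {l : List ℕ} {j : ℕ}
    (h : (fs x l).getD j 0 ≠ 0) : ∃ j', j ≤ j' ∧ l.getD j' 0 ≠ 0 := by
  induction l using fs.induct generalizing j with
  | case1 | case3 => cases j <;> simp [fs] at h
  | case2 a t => exact ⟨j, le_rfl, by cases j <;> simp_all [fs]⟩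
  | case4 k t =>
    match j with
    | 0 => exact ⟨1, by omega, by simp⟩
    | j + 1 => exact ⟨j + 1, le_rfl, by cases j <;> simp_all [fs]⟩
  | case5 t ih =>
    cases j with
    | zero => simp [fs] at h
    | succ j =>
      obtain ⟨_ | j', hjj', hj'⟩ := ih (j := j) (by simpa [fs] using h)
      · simp at hj'
      · exact ⟨j' + 2, by omega, by simpa using hj'⟩

lemma ExpDominates.fs {a b : List ℕ} (h : ExpDominates a b) (x : ℕ) : ExpDominates a (fs x b) := by
  intro i j hi hj
  obtain ⟨j', hjj', hj'⟩ := exists_le_of_getD_fs_ne_zero x hj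
  exact hjj'.trans (h i j' hi hj')

/-- Coefficientwise addition of Cantor normal forms, i.e. the natural (Hessenberg) sum. -/
def addC : List ℕ → List ℕ → List ℕ
  | a, [] => a
  | a, b :: m => (a.getD 0 0 + b) :: addC a.tail m

lemma getD_addC (a b : List ℕ) (j : ℕ) : (addC a b).getD j 0 = a.getD j 0 + b.getD j 0 := by
  induction b generalizing a j with
  | nil => simp [addC]
  | cons y m ih =>
    cases j with
    | zero => cases a <;> simp [addC]
    | succ j =>
      have := ih a.tail j
      cases a <;> simpa [addC] using this

lemma not_isZero_addC {a b : List ℕ} (hb : ¬ isZero b) : ¬ isZero (addC a b) := by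
  simp only [isZero_iff_getD, getD_addC, Nat.add_eq_zero_iff, not_forall] at hb ⊢
  obtain ⟨j, hj⟩ := hb
  exact ⟨j, fun h => hj h.2⟩

lemma toOrd_addC {a b : List ℕ} (h : ExpDominates a b) : toOrd (addC a b) = toOrd a + toOrd b := by
  induction b generalizing a with
  | nil => simp [addC]
  | cons y m ih =>
    rw [addC, toOrd_cons, ih h.tail, toOrd_cons, toOrd_eq_tail a]
    by_cases hm : isZero m
    · simp [toOrd_eq_zero_iff.2 hm, add_assoc]
    · obtain ⟨j, hj⟩ := exists_getD_ne_zero hm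
      have ha : a.getD 0 0 = 0 := h.getD_eq_zero (j := j + 1) (by simpa using hj) j.succ_pos
      rw [ha]
      simp [mul_add, add_assoc]

-- The fundamental sequence only changes the coefficients at and just below the least exponent
-- of `b`, where `a` vanishes.
lemma fs_addC (x : ℕ) {a b : List ℕ} (hb : ¬ isZero b) (h : ExpDominates a b) :
    fs x (addC a b) = addC a (fs x b) := by
  induction b using fs.induct generalizing a with
  | case1 | case3 => simp at hb
  | case2 y t => simp [addC, fs, ← add_assoc]
  | case4 k t =>
    have ha : a.getD 0 0 = 0 := h.getD_eq_zero (i := 0) (j := 1) (by simp) one_pos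
    rw [List.getD_eq_getElem?_getD] at ha
    simp [fs, addC, ha, ← add_assoc]
  | case5 t ih =>
    obtain ⟨j, hj⟩ := exists_getD_ne_zero (by simpa using hb : ¬ isZero t)
    have ha₀ : a.getD 0 0 = 0 :=
      h.getD_eq_zero (i := 0) (j := j + 2) (by simpa using hj) (by omega)
    have ha₁ : a.tail.getD 0 0 = 0 := by
      have := h.getD_eq_zero (i := 1) (j := j + 2) (by simpa using hj) (by omega)
      cases a <;> simp_all
    have ih' := ih (by simpa using hb) h.tail
    simp only [addC, ha₀, ha₁, Nat.zero_add] at ih' ⊢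
    simp only [fs, ih', addC, ha₀, Nat.zero_add]

theorem hardy_addC {a b : List ℕ} (hb : ¬ isZero b) (h : ExpDominates a b) (n : ℕ) :
    hardy (addC a b) n = hardy a (hardy b n) := by
  induction b using toOrd_induction generalizing n with
  | ind b ih =>
    rw [hardy_of_not_isZero (not_isZero_addC hb), fs_addC n hb h, hardy_of_not_isZero hb]
    by_cases hz : isZero (fs n b)
    · have hsum : toOrd (addC a (fs n b)) = toOrd a := by
        simp [toOrd_addC (h.fs n), toOrd_eq_zero_iff.2 hz]
      rw [hardy_of_isZero hz, hardy_congr hsum]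
    · exact ih _ (toOrd_fs_lt n b hb) hz (h.fs n) (n + 1)

end Addition

/-- For ordinals `α, β < ω^ω` (given by CNF coefficient lists) and
naturals `n, m`:
1. if `α ≻ₙ β` then `α ≻_{n+1} β+1` or `α = β+1`;
2. if `α ≻ₙ β` and `n ≥ m` then `H_α(n) > H_β(m)`;
3. if `n > m` then `H_α(n) > H_α(m)`;
4. if `α, β > 0` and the least exponent of the CNF of `α` is at least the greatest
   exponent of the CNF of `β` (i.e. every exponent of `α` is ≥ every exponent of `β`),
   then `H_{α+β}(n) = H_α(H_β(n))` — stated for every representation `γ` of the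
   ordinal sum `α + β`. -/
theorem hardy_lemmas (α β : List ℕ) (n m : ℕ) :
    (FSdesc n α β → (FSdesc (n + 1) α (succC β) ∨ α = succC β)) ∧
    (FSdesc n α β → m ≤ n → hardy β m < hardy α n) ∧
    (m < n → hardy α m < hardy α n) ∧
    (¬ isZero α → ¬ isZero β →
      (∀ i j : ℕ, α.getD i 0 ≠ 0 → β.getD j 0 ≠ 0 → j ≤ i) →
      ∀ γ : List ℕ, toOrd γ = toOrd α + toOrd β →
        hardy γ n = hardy α (hardy β n)) := by
  obtain ⟨mono, lt_of_desc⟩ := strictMono_hardy_and_hardy_lt_of_FSdesc α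
  refine ⟨FSdesc.succ_succC_or_eq, lt_of_desc, fun h => mono h, ?_⟩
  intro _ hβ hdom γ hγ
  rw [hardy_congr (hγ.trans (toOrd_addC hdom).symm)]
  exact hardy_addC hβ hdom n
end

section
/- Let R be a finite TRS and t a basic term. Then: (i) if t is terminating with respect to →_R, then for every →_R-derivation of length m starting from t there is a →_{U(WDP(R)) ∪ WDP(R)}-derivation of length m starting from t♯; (ii) if t is terminating with respect to the innermost relation i→_R, then for every i→_R-derivation of length m starting from t there is a →_{U(WIDP(R)) ∪ WIDP(R)}-derivation of length m starting from t♯; (iii) if moreover every compound symbol occurring in WIDP(R) is nullary, then for every i→_R-derivation of length m starting from t there is a →_{U(DP(R)) ∪ DP(R)}-derivation of length at least m − 1 starting from t♯. -/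
open scoped Classical

/-- First-order terms over a signature `F` (with arity function `ar`) and variables `V`. -/
inductive Tm (F : Type) (ar : F → ℕ) (V : Type) : Type where
  | var : V → Tm F ar V
  | fn : (f : F) → (Fin (ar f) → Tm F ar V) → Tm F ar V

namespace Tm

variable {F : Type} {ar : F → ℕ} {V : Type}

/-- The size of a term: the number of occurrences of variables and function symbols. -/
def size : Tm F ar V → ℕ
  | var _ => 1
  | fn _ ts => 1 + ∑ i, (ts i).size

/-- Number of occurrences of the variable `x` in a term. -/
def count [DecidableEq V] (x : V) : Tm F ar V → ℕ
  | var y => if y = x then 1 else 0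
  | fn _ ts => ∑ i, (ts i).count x

/-- Application of a substitution to a term. -/
def subst (σ : V → Tm F ar V) : Tm F ar V → Tm F ar V
  | var x => σ x
  | fn f ts => fn f fun i => (ts i).subst σ

/-- The set of function symbols occurring in a term. -/
def funcs : Tm F ar V → Set F
  | var _ => ∅
  | fn f ts => insert f (⋃ i, (ts i).funcs)

end Tm

/-- `R` is a term rewrite system: left-hand sides are not variables and every variable
of a right-hand side occurs in the corresponding left-hand side. -/
def IsTRS {F : Type} {ar : F → ℕ} (R : Set (Tm F ar ℕ × Tm F ar ℕ)) : Prop :=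
  ∀ p ∈ R, (∀ x : ℕ, p.1 ≠ Tm.var x) ∧
    ∀ x : ℕ, 0 < Tm.count x p.2 → 0 < Tm.count x p.1

/-- The rewrite relation of `R`: the closure of the rules under contexts and
substitutions. -/
inductive Rew {F : Type} {ar : F → ℕ} (R : Set (Tm F ar ℕ × Tm F ar ℕ)) :
    Tm F ar ℕ → Tm F ar ℕ → Prop
  | rule {l r} (σ : ℕ → Tm F ar ℕ) : (l, r) ∈ R → Rew R (l.subst σ) (r.subst σ)
  | congr {f} {ts : Fin (ar f) → Tm F ar ℕ} (i) {t'} :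
      Rew R (ts i) t' → Rew R (.fn f ts) (.fn f (Function.update ts i t'))

/-- A `ρ`-derivation of length `n`: `d 0 → d 1 → ⋯ → d n`. -/
def ChainOf {A : Type} (ρ : A → A → Prop) (n : ℕ) (d : ℕ → A) : Prop :=
  ∀ i < n, ρ (d i) (d (i + 1))

/-- The defined symbols of `R`: the root symbols of left-hand sides of rules of `R`. -/
def DefinedSym {F : Type} {ar : F → ℕ} (R : Set (Tm F ar ℕ × Tm F ar ℕ)) : Set F :=
  {f | ∃ p ∈ R, ∃ ts, p.1 = Tm.fn f ts}

/-- The immediate-subterm relation: `u` is a child of `t`. -/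
def childR {F : Type} {ar : F → ℕ} (u t : Tm F ar ℕ) : Prop :=
  ∃ f ts i, t = Tm.fn f ts ∧ u = ts i

/-- `t` is a normal form of `R`. -/
def IsNF {F : Type} {ar : F → ℕ} (R : Set (Tm F ar ℕ × Tm F ar ℕ))
    (t : Tm F ar ℕ) : Prop :=
  ¬ ∃ u, Rew R t u

/-- The innermost rewrite relation of `R`: a rule may only be applied if all proper
subterms of the redex are normal forms of `R`. -/
inductive IRew {F : Type} {ar : F → ℕ} (R : Set (Tm F ar ℕ × Tm F ar ℕ)) :
    Tm F ar ℕ → Tm F ar ℕ → Prop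
  | rule {l r} (σ : ℕ → Tm F ar ℕ) : (l, r) ∈ R →
      (∀ u, Relation.TransGen childR u (l.subst σ) → IsNF R u) →
      IRew R (l.subst σ) (r.subst σ)
  | congr {f} {ts : Fin (ar f) → Tm F ar ℕ} (i) {t'} :
      IRew R (ts i) t' → IRew R (.fn f ts) (.fn f (Function.update ts i t'))

/-- The extended signature: for every `f ∈ F` a base copy and a marked (dependency
pair) symbol `f♯`, and for every rule `l → r` and every `n` a fresh `n`-ary compound
symbol `c_{l→r}`. -/
inductive MS (F : Type) (ar : F → ℕ) : Type where
  | base : F → MS F ar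
  | mark : F → MS F ar
  | comp : (Tm F ar ℕ × Tm F ar ℕ) → ℕ → MS F ar

/-- Arities on the extended signature. -/
def mar {F : Type} (ar : F → ℕ) : MS F ar → ℕ
  | .base f => ar f
  | .mark f => ar f
  | .comp _ n => n

variable {F : Type} {ar : F → ℕ}

/-- The inclusion of terms over `F` into terms over the extended signature. -/
def liftT : Tm F ar ℕ → Tm (MS F ar) (mar ar) ℕ
  | .var x => .var x
  | .fn f ts => .fn (MS.base f) fun i => liftT (ts i)

/-- Marking: `x♯ = x` and `(f(t₁,…,tₙ))♯ = f♯(t₁,…,tₙ)`. -/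
def markT : Tm F ar ℕ → Tm (MS F ar) (mar ar) ℕ
  | .var x => .var x
  | .fn f ts => .fn (MS.mark f) fun i => liftT (ts i)

/-- The list of maximal `X`-rooted subterms of a term, in left-to-right order: the
unique `[u₁,…,uₙ]` such that `t = C⟨u₁,…,uₙ⟩_X`. -/
noncomputable def maxSubts (X : Tm F ar ℕ → Prop) : Tm F ar ℕ → List (Tm F ar ℕ)
  | .var x => if X (.var x) then [.var x] else []
  | .fn f ts =>
      if X (.fn f ts) then [.fn f ts]
      else (List.ofFn fun i => maxSubts X (ts i)).flatten

/-- `COM_{l→r}(t₁,…,tₙ)`: `t₁` if `n = 1`, and otherwise the fresh compound symbol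
`c_{l→r}` applied to `t₁,…,tₙ`. -/
noncomputable def com (p : Tm F ar ℕ × Tm F ar ℕ)
    (us : List (Tm (MS F ar) (mar ar) ℕ)) : Tm (MS F ar) (mar ar) ℕ :=
  if h : us.length = 1 then us.get ⟨0, by omega⟩
  else .fn (MS.comp p us.length) fun i => us.get i

/-- `u` has its root in `D ∪ V` (for `D` the defined symbols of `R`). -/
def RootDV (R : Set (Tm F ar ℕ × Tm F ar ℕ)) (u : Tm F ar ℕ) : Prop :=
  (∃ x, u = Tm.var x) ∨ ∃ f ts, u = Tm.fn f ts ∧ f ∈ DefinedSym R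

/-- `u` has its root in `D` (for `D` the defined symbols of `R`). -/
def RootD (R : Set (Tm F ar ℕ × Tm F ar ℕ)) (u : Tm F ar ℕ) : Prop :=
  ∃ f ts, u = Tm.fn f ts ∧ f ∈ DefinedSym R

/-- The weak dependency pairs of `R`:  for every rule `l → r ∈ R`, if
`r = C⟨u₁,…,uₙ⟩_{D∪V}` then `l♯ → COM_{l→r}(u₁♯,…,uₙ♯)` is a weak dependency pair. -/
noncomputable def WDPs (R : Set (Tm F ar ℕ × Tm F ar ℕ)) :
    Set (Tm (MS F ar) (mar ar) ℕ × Tm (MS F ar) (mar ar) ℕ) :=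
  {q | ∃ p ∈ R, q = (markT p.1, com p ((maxSubts (RootDV R) p.2).map markT))}

/-- The weak innermost dependency pairs of `R`: as for `WDPs`, but with respect to the
decomposition `r = C⟨u₁,…,uₙ⟩_D`. -/
noncomputable def WIDPs (R : Set (Tm F ar ℕ × Tm F ar ℕ)) :
    Set (Tm (MS F ar) (mar ar) ℕ × Tm (MS F ar) (mar ar) ℕ) :=
  {q | ∃ p ∈ R, q = (markT p.1, com p ((maxSubts (RootD R) p.2).map markT))}

/-- The (standard) dependency pairs of `R`:
`DP(R) = {l♯ → u♯ : l → r ∈ R, u a subterm of r with defined root}`. -/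
def DPs (R : Set (Tm F ar ℕ × Tm F ar ℕ)) :
    Set (Tm (MS F ar) (mar ar) ℕ × Tm (MS F ar) (mar ar) ℕ) :=
  {q | ∃ p ∈ R, ∃ u, Relation.ReflTransGen childR u p.2 ∧ RootD R u ∧
    q = (markT p.1, markT u)}

/-- `f ▷_d g`: there is a rule `l → r ∈ R` with `root(l) = f` and `g` a defined symbol
occurring in `r`. -/
def depR (R : Set (Tm F ar ℕ × Tm F ar ℕ)) (f g : F) : Prop :=
  ∃ p ∈ R, (∃ ts, p.1 = Tm.fn f ts) ∧ g ∈ DefinedSym R ∧ g ∈ Tm.funcs p.2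

/-- The usable rules of a term `t` over the extended signature: the rules of `R` whose
left-hand side root is `▷_d^*`-reachable from some symbol occurring in `t`. -/
def usableOf (R : Set (Tm F ar ℕ × Tm F ar ℕ)) (t : Tm (MS F ar) (mar ar) ℕ) :
    Set (Tm F ar ℕ × Tm F ar ℕ) :=
  {p | p ∈ R ∧ ∃ g f, MS.base g ∈ Tm.funcs t ∧ Relation.ReflTransGen (depR R) g f ∧
    ∃ ts, p.1 = Tm.fn f ts}

/-- The usable rules of a set `P` of dependency pairs: `U(P) = ⋃_{l→r ∈ P} U(r)`. -/
def usableRules (R : Set (Tm F ar ℕ × Tm F ar ℕ))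
    (P : Set (Tm (MS F ar) (mar ar) ℕ × Tm (MS F ar) (mar ar) ℕ)) :
    Set (Tm F ar ℕ × Tm F ar ℕ) :=
  {p | ∃ q ∈ P, p ∈ usableOf R q.2}

/-- The combined rewrite system `U(P) ∪ P` over the extended signature. -/
def combined (R : Set (Tm F ar ℕ × Tm F ar ℕ))
    (P : Set (Tm (MS F ar) (mar ar) ℕ × Tm (MS F ar) (mar ar) ℕ)) :
    Set (Tm (MS F ar) (mar ar) ℕ × Tm (MS F ar) (mar ar) ℕ) :=
  ((fun p : Tm F ar ℕ × Tm F ar ℕ => (liftT p.1, liftT p.2)) '' usableRules R P) ∪ P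

/-- `t` is a basic term: `t = f(t₁,…,tₙ)` with `f` defined and no `tᵢ` containing a
defined symbol. -/
def BasicTm (R : Set (Tm F ar ℕ × Tm F ar ℕ)) (t : Tm F ar ℕ) : Prop :=
  ∃ f ts, t = Tm.fn f ts ∧ f ∈ DefinedSym R ∧
    ∀ i, ∀ g ∈ Tm.funcs (ts i), g ∉ DefinedSym R

/-!
A derivation from `f(t₁,…,tₙ)`, where every defined symbol of the `tᵢ` is `▷_d^*`-reachable
from a symbol of a right-hand side of the dependency pairs, is simulated on `f♯(t₁,…,tₙ)` by
strong induction on its length. Steps inside the arguments are mirrored by usable rules. A root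
step `lσ → rσ` with `r = C⟨u₁,…,uₖ⟩` is mirrored by the pair `l♯σ → COM(u₁♯,…,uₖ♯)σ`: the
context `C` has no defined symbols and any variable in it carries a normal form (innermost
case), so the rest of the derivation splits into derivations of the `uᵢσ` whose lengths add up
to the remaining length. These are simulated recursively (defined root) or by usable rules
(variable), side by side below the compound symbol. For (iii) there is at most one `uᵢ`, so
`l♯ → u₁♯` is a standard dependency pair, and only a last root step with `k = 0` may go
unsimulated.
-/

open Relation

section Derivations

variable {A : Type} {ρ : A → A → Prop}

def HasDerivation (ρ : A → A → Prop) (n : ℕ) (a : A) : Prop :=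
  ∃ d : ℕ → A, d 0 = a ∧ ChainOf ρ n d

theorem ChainOf.tail {n : ℕ} {d : ℕ → A} (h : ChainOf ρ (n + 1) d) :
    ChainOf ρ n fun i => d (i + 1) :=
  fun i hi => h (i + 1) (by omega)

namespace HasDerivation

theorem zero (a : A) : HasDerivation ρ 0 a :=
  ⟨fun _ => a, rfl, fun _ h => absurd h (Nat.not_lt_zero _)⟩

theorem mono {n k : ℕ} {a : A} (h : HasDerivation ρ n a) (hk : k ≤ n) : HasDerivation ρ k a :=
  let ⟨d, hd, hc⟩ := h
  ⟨d, hd, fun i hi => hc i (by omega)⟩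

theorem cons {n : ℕ} {a b : A} (hab : ρ a b) (h : HasDerivation ρ n b) :
    HasDerivation ρ (n + 1) a := by
  obtain ⟨d, rfl, hc⟩ := h
  refine ⟨fun i => Nat.casesOn i a d, rfl, fun i hi => ?_⟩
  cases i with
  | zero => exact hab
  | succ i => exact hc i (by omega)

theorem uncons {n : ℕ} {a : A} (h : HasDerivation ρ (n + 1) a) :
    ∃ b, ρ a b ∧ HasDerivation ρ n b :=
  let ⟨d, hd, hc⟩ := h
  ⟨d 1, hd ▸ hc 0 (by omega), fun i => d (i + 1), rfl, hc.tail⟩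

theorem append {k n : ℕ} {d : ℕ → A} (hc : ChainOf ρ k d) (h : HasDerivation ρ n (d k)) :
    HasDerivation ρ (k + n) (d 0) := by
  induction k generalizing d with
  | zero => simpa using h
  | succ k ih => simpa [Nat.succ_add] using cons (hc 0 (by omega)) (ih hc.tail h)

end HasDerivation

end Derivations

theorem List.Forall₂.imp_of_mem {α β : Type} {R S : α → β → Prop}
    {l₁ : List α} {l₂ : List β}
    (H : ∀ a ∈ l₁, ∀ b ∈ l₂, R a b → S a b) (h : List.Forall₂ R l₁ l₂) :
    List.Forall₂ S l₁ l₂ := by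
  induction h with
  | nil => exact .nil
  | cons hab _ ih =>
    exact .cons (H _ mem_cons_self _ mem_cons_self hab)
      (ih fun a ha b hb => H a (mem_cons_of_mem _ ha) b (mem_cons_of_mem _ hb))

theorem List.forall₂_ofFn {α β : Type} {R : α → β → Prop} {n : ℕ} {f : Fin n → α}
    {g : Fin n → β} (h : ∀ i, R (f i) (g i)) : List.Forall₂ R (List.ofFn f) (List.ofFn g) :=
  List.forall₂_iff_get.2
    ⟨by simp, fun i h₁ _ => by simpa using h ⟨i, by simpa using h₁⟩⟩

section Congruence

variable {G : Type} {arG : G → ℕ} {S : Set (Tm G arG ℕ × Tm G arG ℕ)}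

theorem ChainOf.rew_fn_update {f : G} (as : Fin (arG f) → Tm G arG ℕ) (i : Fin (arG f))
    {k : ℕ} {d : ℕ → Tm G arG ℕ} (hc : ChainOf (Rew S) k d) :
    ChainOf (Rew S) k fun n => .fn f (Function.update as i (d n)) := by
  intro n hn
  simpa using Rew.congr (ts := Function.update as i (d n)) i (by simpa using hc n hn)

theorem HasDerivation.fn_of_args {f : G} (kf : Fin (arG f) → ℕ) (s : Finset (Fin (arG f))) :
    ∀ as : Fin (arG f) → Tm G arG ℕ, (∀ i ∈ s, HasDerivation (Rew S) (kf i) (as i)) →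
      HasDerivation (Rew S) (∑ i ∈ s, kf i) (.fn f as) := by
  induction s using Finset.induction_on with
  | empty => exact fun as _ => zero _
  | insert i s hi ih =>
    intro as h
    obtain ⟨d, hd, hc⟩ := h i (Finset.mem_insert_self i s)
    have hrest := ih (Function.update as i (d (kf i))) fun j hj => by
      rw [Function.update_of_ne (ne_of_mem_of_not_mem hj hi)]
      exact h j (Finset.mem_insert_of_mem hj)
    simpa [Finset.sum_insert hi, hd] using append (hc.rew_fn_update as i) hrest

end Congruence

namespace Tm

variable {V : Type}

theorem count_fn_pos_iff [DecidableEq V] {x : V} {f : F} {ts : Fin (ar f) → Tm F ar V} :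
    0 < count x (fn f ts) ↔ ∃ i, 0 < count x (ts i) := by
  simp [count, Finset.sum_pos_iff]

theorem mem_funcs_subst [DecidableEq V] {σ : V → Tm F ar V} {g : F} :
    ∀ {u : Tm F ar V}, g ∈ (u.subst σ).funcs →
      g ∈ u.funcs ∨ ∃ x, 0 < count x u ∧ g ∈ (σ x).funcs
  | .var x, h => .inr ⟨x, by simp [count], h⟩
  | .fn f ts, h => by
    simp only [subst, funcs, Set.mem_insert_iff, Set.mem_iUnion] at h
    rcases h with rfl | ⟨i, hi⟩
    · exact .inl (Set.mem_insert _ _)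
    · rcases mem_funcs_subst hi with h | ⟨x, hx, hgx⟩
      · exact .inl (Set.mem_insert_of_mem _ (Set.mem_iUnion.2 ⟨i, h⟩))
      · exact .inr ⟨x, count_fn_pos_iff.2 ⟨i, hx⟩, hgx⟩

end Tm

theorem childR_fn {f : F} (ts : Fin (ar f) → Tm F ar ℕ) (i : Fin (ar f)) :
    childR (ts i) (.fn f ts) :=
  ⟨f, ts, i, rfl, rfl⟩

theorem funcs_subset_of_reflTransGen_childR {u t : Tm F ar ℕ} (h : ReflTransGen childR u t) :
    u.funcs ⊆ t.funcs := by
  induction h with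
  | refl => exact subset_rfl
  | tail _ hc ih =>
    obtain ⟨f, ts, i, rfl, rfl⟩ := hc
    exact ih.trans fun g hg => Set.mem_insert_of_mem _ (Set.mem_iUnion.2 ⟨i, hg⟩)

theorem count_pos_of_reflTransGen_childR {x : ℕ} {u t : Tm F ar ℕ}
    (h : ReflTransGen childR u t) (hx : 0 < u.count x) : 0 < t.count x := by
  induction h with
  | refl => exact hx
  | tail _ hc ih =>
    obtain ⟨f, ts, i, rfl, rfl⟩ := hc
    exact Tm.count_fn_pos_iff.2 ⟨i, ih⟩

theorem reflTransGen_childR_subst {σ : ℕ → Tm F ar ℕ} {x : ℕ} :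
    ∀ {s : Tm F ar ℕ}, 0 < s.count x → ReflTransGen childR (σ x) (s.subst σ)
  | .var y, h => by
    obtain rfl : y = x := by by_contra hne; simp [Tm.count, hne] at h
    exact .refl
  | .fn f ts, h => by
    obtain ⟨i, hi⟩ := Tm.count_fn_pos_iff.1 h
    exact (reflTransGen_childR_subst hi).tail (childR_fn (fun j => (ts j).subst σ) i)

theorem IsTRS.exists_lhs_eq_fn {R : Set (Tm F ar ℕ × Tm F ar ℕ)} (hR : IsTRS R)
    {l r : Tm F ar ℕ} (hp : (l, r) ∈ R) : ∃ f ls, l = .fn f ls := by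
  cases l with
  | var x => exact absurd rfl ((hR _ hp).1 x)
  | fn f ls => exact ⟨f, ls, rfl⟩

theorem IsTRS.count_pos_lhs {R : Set (Tm F ar ℕ × Tm F ar ℕ)} (hR : IsTRS R)
    {l r : Tm F ar ℕ} (hp : (l, r) ∈ R) {x : ℕ} (hx : 0 < r.count x) : 0 < l.count x :=
  (hR _ hp).2 x hx

theorem liftT_subst (σ : ℕ → Tm F ar ℕ) (u : Tm F ar ℕ) :
    liftT (u.subst σ) = (liftT u).subst (liftT ∘ σ) := by
  induction u with
  | var x => rfl
  | fn f ts ih => exact congrArg (Tm.fn (MS.base f)) (funext ih)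

theorem markT_fn_subst (σ : ℕ → Tm F ar ℕ) {f : F} (ls : Fin (ar f) → Tm F ar ℕ) :
    markT ((Tm.fn f ls).subst σ) = (markT (.fn f ls)).subst (liftT ∘ σ) :=
  congrArg (Tm.fn (MS.mark f)) (funext fun i => liftT_subst σ (ls i))

theorem markT_fn_update {f : F} (ts : Fin (ar f) → Tm F ar ℕ) (i : Fin (ar f))
    (t' : Tm F ar ℕ) :
    markT (.fn f (Function.update ts i t')) =
      .fn (MS.mark f) (Function.update (liftT ∘ ts) i (liftT t')) :=
  congrArg (Tm.fn (MS.mark f)) (Function.comp_update liftT ts i t')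

theorem liftT_fn_update {f : F} (ts : Fin (ar f) → Tm F ar ℕ) (i : Fin (ar f))
    (t' : Tm F ar ℕ) :
    liftT (.fn f (Function.update ts i t')) =
      .fn (MS.base f) (Function.update (liftT ∘ ts) i (liftT t')) :=
  congrArg (Tm.fn (MS.base f)) (Function.comp_update liftT ts i t')

theorem base_mem_funcs_liftT {g : F} : ∀ {w : Tm F ar ℕ}, g ∈ w.funcs →
    MS.base g ∈ (liftT w).funcs
  | .var _, h => h.elim
  | .fn f ts, h => by
    simp only [Tm.funcs, liftT, Set.mem_insert_iff, Set.mem_iUnion] at h ⊢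
    rcases h with rfl | ⟨i, hi⟩
    · exact .inl rfl
    · exact .inr ⟨i, base_mem_funcs_liftT hi⟩

theorem base_mem_funcs_markT_fn {f g : F} {ws : Fin (ar f) → Tm F ar ℕ} {j : Fin (ar f)}
    (h : g ∈ (ws j).funcs) : MS.base g ∈ (markT (.fn f ws)).funcs :=
  Set.mem_insert_of_mem _ (Set.mem_iUnion.2 ⟨j, base_mem_funcs_liftT h⟩)

theorem mem_maxSubts {X : Tm F ar ℕ → Prop} :
    ∀ {t u : Tm F ar ℕ}, u ∈ maxSubts X t → X u ∧ ReflTransGen childR u t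
  | .var x, u, h => by
    rw [maxSubts] at h
    split at h
    · obtain rfl := List.mem_singleton.1 h
      exact ⟨‹_›, .refl⟩
    · simp at h
  | .fn f ts, u, h => by
    rw [maxSubts] at h
    split at h
    · obtain rfl := List.mem_singleton.1 h
      exact ⟨‹_›, .refl⟩
    · obtain ⟨_, hl, hu⟩ := List.mem_flatten.1 h
      obtain ⟨i, rfl⟩ := List.mem_ofFn.1 hl
      have ⟨hX, hsub⟩ := mem_maxSubts hu
      exact ⟨hX, hsub.tail (childR_fn ts i)⟩

theorem funcs_subset_com (p : Tm F ar ℕ × Tm F ar ℕ) {L : List (Tm (MS F ar) (mar ar) ℕ)}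
    {w : Tm (MS F ar) (mar ar) ℕ} (hw : w ∈ L) : w.funcs ⊆ (com p L).funcs := by
  rw [com]
  split
  · next h =>
    obtain ⟨a, rfl⟩ := List.length_eq_one_iff.1 h
    obtain rfl := List.mem_singleton.1 hw
    exact subset_rfl
  · obtain ⟨i, rfl⟩ := List.mem_iff_get.1 hw
    exact fun g hg => Set.mem_insert_of_mem _ (Set.mem_iUnion.2 ⟨i, hg⟩)

theorem HasDerivation.com_subst {S : Set (Tm (MS F ar) (mar ar) ℕ × Tm (MS F ar) (mar ar) ℕ)}
    (p : Tm F ar ℕ × Tm F ar ℕ) (τ : ℕ → Tm (MS F ar) (mar ar) ℕ)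
    {L : List (Tm (MS F ar) (mar ar) ℕ)} {K : List ℕ}
    (h : List.Forall₂ (fun w k => HasDerivation (Rew S) k (w.subst τ)) L K) :
    HasDerivation (Rew S) K.sum ((com p L).subst τ) := by
  have hlen := h.length_eq
  by_cases h1 : L.length = 1
  · obtain ⟨w, rfl⟩ := List.length_eq_one_iff.1 h1
    obtain ⟨k, rfl⟩ := List.length_eq_one_iff.1 (hlen ▸ h1)
    simpa [com] using h
  · have hget := (List.forall₂_iff_get.1 h).2
    have hsum : ∑ i : Fin L.length, K[i.1]'(hlen ▸ i.2) = K.sum := by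
      rw [← Fin.sum_univ_getElem]
      exact Fintype.sum_equiv (finCongr hlen) _ _ fun _ => rfl
    rw [com, dif_neg h1, ← hsum]
    exact fn_of_args (f := MS.comp p L.length) _ .univ (fun i => (L.get i).subst τ)
      fun i _ => hget i i.2 (hlen ▸ i.2)

section Usable

variable (R : Set (Tm F ar ℕ × Tm F ar ℕ))
  (P : Set (Tm (MS F ar) (mar ar) ℕ × Tm (MS F ar) (mar ar) ℕ))

/-- `U(P)` consists of the rules of `R` whose left-hand side has its root in this set. -/
def usableSyms : Set F :=
  {f | ∃ q ∈ P, ∃ g, MS.base g ∈ q.2.funcs ∧ ReflTransGen (depR R) g f}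

def DefinedSymsUsable (w : Tm F ar ℕ) : Prop :=
  ∀ g ∈ w.funcs, g ∈ DefinedSym R → g ∈ usableSyms R P

variable {R P}

theorem mem_usableSyms_of_mem_funcs {q} (hq : q ∈ P) {g : F} (hg : MS.base g ∈ q.2.funcs) :
    g ∈ usableSyms R P :=
  ⟨q, hq, g, hg, .refl⟩

theorem mem_usableSyms_of_depR {f g : F} (hf : f ∈ usableSyms R P) (h : depR R f g) :
    g ∈ usableSyms R P :=
  let ⟨q, hq, g₀, hg₀, hchain⟩ := hf
  ⟨q, hq, g₀, hg₀, hchain.tail h⟩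

theorem liftT_mem_combined {l r : Tm F ar ℕ} (hp : (l, r) ∈ R) {f : F}
    {ls : Fin (ar f) → Tm F ar ℕ} (hl : l = .fn f ls) (hf : f ∈ usableSyms R P) :
    (liftT l, liftT r) ∈ combined R P :=
  let ⟨q, hq, g, hg, hchain⟩ := hf
  .inl ⟨(l, r), ⟨q, hq, hp, g, f, hg, hchain, ls, hl⟩, rfl⟩

namespace DefinedSymsUsable

theorem mono {u w : Tm F ar ℕ} (hw : DefinedSymsUsable R P w) (h : u.funcs ⊆ w.funcs) :
    DefinedSymsUsable R P u :=
  fun g hg => hw g (h hg)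

theorem fn_iff {f : F} {ts : Fin (ar f) → Tm F ar ℕ} :
    DefinedSymsUsable R P (.fn f ts) ↔
      (f ∈ DefinedSym R → f ∈ usableSyms R P) ∧ ∀ i, DefinedSymsUsable R P (ts i) := by
  simp only [DefinedSymsUsable, Tm.funcs, Set.forall_mem_insert, Set.mem_iUnion,
    forall_exists_index]
  exact and_congr_right' ⟨fun h i g hg => h g i hg, fun h g i hg => h i g hg⟩

theorem subst {u : Tm F ar ℕ} {σ : ℕ → Tm F ar ℕ} (hu : DefinedSymsUsable R P u)
    (hσ : ∀ x, 0 < u.count x → DefinedSymsUsable R P (σ x)) :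
    DefinedSymsUsable R P (u.subst σ) := fun g hg =>
  (Tm.mem_funcs_subst hg).elim (hu g) fun ⟨x, hx, hgx⟩ => hσ x hx g hgx

theorem of_subst {u : Tm F ar ℕ} {σ : ℕ → Tm F ar ℕ}
    (h : DefinedSymsUsable R P (u.subst σ)) {x : ℕ} (hx : 0 < u.count x) :
    DefinedSymsUsable R P (σ x) :=
  h.mono (funcs_subset_of_reflTransGen_childR (reflTransGen_childR_subst hx))

theorem forall_update {f : F} {ts : Fin (ar f) → Tm F ar ℕ}
    (hts : ∀ j, DefinedSymsUsable R P (ts j))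
    {i : Fin (ar f)} {t' : Tm F ar ℕ} (ht' : DefinedSymsUsable R P t') :
    ∀ j, DefinedSymsUsable R P (Function.update ts i t' j) :=
  (Function.forall_update_iff _ fun _ t => DefinedSymsUsable R P t).2 ⟨ht', fun j _ => hts j⟩

theorem of_rhs_var (hR : IsTRS R) {f : F} {ls : Fin (ar f) → Tm F ar ℕ} {r : Tm F ar ℕ}
    (hp : (.fn f ls, r) ∈ R) {σ : ℕ → Tm F ar ℕ}
    (hls : ∀ i, DefinedSymsUsable R P ((ls i).subst σ)) {x : ℕ} (hx : 0 < r.count x) :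
    DefinedSymsUsable R P (σ x) :=
  let ⟨j, hj⟩ := Tm.count_fn_pos_iff.1 (hR.count_pos_lhs hp hx)
  (hls j).of_subst hj

theorem args_subst {q} (hq : q ∈ P) {g : F} {ws : Fin (ar g) → Tm F ar ℕ}
    (hws : (markT (.fn g ws)).funcs ⊆ q.2.funcs) {σ : ℕ → Tm F ar ℕ}
    (hσ : ∀ x, 0 < (Tm.fn g ws).count x → DefinedSymsUsable R P (σ x)) (j : Fin (ar g)) :
    DefinedSymsUsable R P ((ws j).subst σ) :=
  .subst (fun _ hg _ => mem_usableSyms_of_mem_funcs hq (hws (base_mem_funcs_markT_fn hg)))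
    fun x hx => hσ x (Tm.count_fn_pos_iff.2 ⟨j, hx⟩)

theorem root {f : F} {ts : Fin (ar f) → Tm F ar ℕ} (h : DefinedSymsUsable R P (.fn f ts))
    (hf : f ∈ DefinedSym R) : f ∈ usableSyms R P :=
  h f (Set.mem_insert _ _) hf

theorem rew (hR : IsTRS R) {w w' : Tm F ar ℕ} (h : Rew R w w') (hw : DefinedSymsUsable R P w) :
    DefinedSymsUsable R P w' := by
  induction h with
  | @rule l r σ hp =>
    obtain ⟨f, ls, rfl⟩ := hR.exists_lhs_eq_fn hp
    have hf : f ∈ usableSyms R P := hw.root ⟨_, hp, ls, rfl⟩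
    exact .subst (fun g hg hgD => mem_usableSyms_of_depR hf ⟨_, hp, ⟨ls, rfl⟩, hgD, hg⟩)
      fun x hx => hw.of_subst (hR.count_pos_lhs hp hx)
  | congr i _ ih =>
    obtain ⟨hf, hts⟩ := fn_iff.1 hw
    exact fn_iff.2 ⟨hf, forall_update hts (ih (hts i))⟩

end DefinedSymsUsable

theorem rew_liftT (hR : IsTRS R) {w w' : Tm F ar ℕ} (h : Rew R w w')
    (hw : DefinedSymsUsable R P w) : Rew (combined R P) (liftT w) (liftT w') := by
  induction h with
  | @rule l r σ hp =>
    obtain ⟨f, ls, rfl⟩ := hR.exists_lhs_eq_fn hp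
    rw [liftT_subst, liftT_subst]
    exact .rule _ (liftT_mem_combined hp rfl (hw.root ⟨_, hp, ls, rfl⟩))
  | congr i _ ih =>
    rw [liftT_fn_update]
    exact .congr (f := MS.base _) (ts := liftT ∘ _) i (ih ((DefinedSymsUsable.fn_iff.1 hw).2 i))

theorem rew_markT_fn_update (hR : IsTRS R) {f : F} {ts : Fin (ar f) → Tm F ar ℕ}
    {i : Fin (ar f)} {t' : Tm F ar ℕ} (h : Rew R (ts i) t') (hts : DefinedSymsUsable R P (ts i)) :
    Rew (combined R P) (markT (.fn f ts)) (markT (.fn f (Function.update ts i t'))) := by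
  rw [markT_fn_update]
  exact .congr (f := MS.mark f) (ts := liftT ∘ ts) i (rew_liftT hR h hts)

theorem rew_markT_fn_subst {b : Tm (MS F ar) (mar ar) ℕ} {f : F} {ls : Fin (ar f) → Tm F ar ℕ}
    (hq : (markT (.fn f ls), b) ∈ P) (σ : ℕ → Tm F ar ℕ) :
    Rew (combined R P) (markT ((Tm.fn f ls).subst σ)) (b.subst (liftT ∘ σ)) := by
  rw [markT_fn_subst]
  exact .rule _ (.inr hq)

theorem HasDerivation.liftT_of_le_rew (hR : IsTRS R) {step : Tm F ar ℕ → Tm F ar ℕ → Prop}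
    (hstep : ∀ {s u}, step s u → Rew R s u) {m : ℕ} :
    ∀ {w : Tm F ar ℕ}, DefinedSymsUsable R P w → HasDerivation step m w →
      HasDerivation (Rew (combined R P)) m (liftT w) := by
  induction m with
  | zero => exact fun _ _ => zero _
  | succ m ih =>
    intro w hw hd
    obtain ⟨w', hww', hd⟩ := hd.uncons
    exact .cons (rew_liftT hR (hstep hww') hw) (ih (hw.rew hR (hstep hww')) hd)

end Usable

/-- Both `→_R` (with `X = RootDV R`) and `i→_R` (with any `X`) are rewrite strategies in
this sense. -/
structure IsRewStrategy (R : Set (Tm F ar ℕ × Tm F ar ℕ)) (X : Tm F ar ℕ → Prop)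
    (step : Tm F ar ℕ → Tm F ar ℕ → Prop) : Prop where
  le_rew : ∀ {s u}, step s u → Rew R s u
  root_or_arg : ∀ {s u}, step s u →
    (∃ l r σ, (l, r) ∈ R ∧ s = l.subst σ ∧ u = r.subst σ ∧
      ∀ x, 0 < l.count x → X (.var x) ∨ ∀ w, ¬ step (σ x) w) ∨
    (∃ f, ∃ ts : Fin (ar f) → Tm F ar ℕ, ∃ i t', s = .fn f ts ∧
      u = .fn f (Function.update ts i t') ∧ step (ts i) t')

section Strategies

variable {R : Set (Tm F ar ℕ × Tm F ar ℕ)}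

theorem isRewStrategy_rew : IsRewStrategy R (RootDV R) (Rew R) where
  le_rew h := h
  root_or_arg h := by
    cases h with
    | rule σ hp => exact .inl ⟨_, _, σ, hp, rfl, rfl, fun x _ => .inl (.inl ⟨x, rfl⟩)⟩
    | congr i h => exact .inr ⟨_, _, i, _, rfl, rfl, h⟩

theorem IRew.rew {s u : Tm F ar ℕ} (h : IRew R s u) : Rew R s u := by
  induction h with
  | rule σ hp _ => exact .rule σ hp
  | congr i _ ih => exact .congr i ih

theorem isRewStrategy_iRew (hR : IsTRS R) (X : Tm F ar ℕ → Prop) :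
    IsRewStrategy R X (IRew R) where
  le_rew := IRew.rew
  root_or_arg h := by
    cases h with
    | @rule l r σ hp hnf =>
      refine .inl ⟨l, r, σ, hp, rfl, rfl, fun x hx => .inr fun w hw => ?_⟩
      obtain ⟨f, ls, rfl⟩ := hR.exists_lhs_eq_fn hp
      obtain ⟨i, hi⟩ := Tm.count_fn_pos_iff.1 hx
      exact hnf _ (.tail' (reflTransGen_childR_subst hi) (childR_fn _ i)) ⟨w, hw.rew⟩
    | congr i h => exact .inr ⟨_, _, i, _, rfl, rfl, h⟩

end Strategies

namespace IsRewStrategy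

variable {R : Set (Tm F ar ℕ × Tm F ar ℕ)} {X : Tm F ar ℕ → Prop}
  {step : Tm F ar ℕ → Tm F ar ℕ → Prop}

theorem exists_hasDerivation_args (hR : IsTRS R) (hstep : IsRewStrategy R X step) {f : F}
    (hf : f ∉ DefinedSym R) {k : ℕ} :
    ∀ {as : Fin (ar f) → Tm F ar ℕ}, HasDerivation step k (.fn f as) →
      ∃ kf : Fin (ar f) → ℕ, ∑ i, kf i = k ∧ ∀ i, HasDerivation step (kf i) (as i) := by
  induction k with
  | zero => exact fun _ => ⟨0, by simp, fun _ => .zero _⟩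
  | succ k ih =>
    intro as hd
    obtain ⟨b, hb, hd⟩ := hd.uncons
    rcases hstep.root_or_arg hb with
      ⟨l, r, σ, hp, hs, -, -⟩ | ⟨f', ts, i, t', hs, rfl, hst⟩
    · obtain ⟨g, ls, rfl⟩ := hR.exists_lhs_eq_fn hp
      obtain rfl := (Tm.fn.inj hs).1
      exact absurd ⟨_, hp, ls, rfl⟩ hf
    · cases hs
      obtain ⟨kf, rfl, hkf⟩ := ih hd
      refine ⟨kf + Pi.single i 1, by simp [Finset.sum_add_distrib], fun j => ?_⟩
      by_cases hji : j = i
      · subst hji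
        simpa using HasDerivation.cons hst (by simpa using hkf j)
      · simpa [hji] using hkf j

theorem exists_hasDerivation_maxSubts (hR : IsTRS R) (hstep : IsRewStrategy R X step)
    (hXD : ∀ f (ts : Fin (ar f) → Tm F ar ℕ), f ∈ DefinedSym R → X (.fn f ts))
    (σ : ℕ → Tm F ar ℕ) (t : Tm F ar ℕ) {k : ℕ}
    (hvars : ∀ x, 0 < t.count x → X (.var x) ∨ ∀ w, ¬ step (σ x) w)
    (hd : HasDerivation step k (t.subst σ)) :
    ∃ K : List ℕ, K.sum = k ∧
      List.Forall₂ (fun u k => HasDerivation step k (u.subst σ)) (maxSubts X t) K := by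
  induction t generalizing k with
  | var x =>
    rw [maxSubts]
    split
    · exact ⟨[k], by simp, .cons hd .nil⟩
    · next hX =>
      obtain rfl : k = 0 := by
        rcases k with _ | k
        · rfl
        · obtain ⟨w, hw, -⟩ := hd.uncons
          exact ((hvars x (by simp [Tm.count])).resolve_left hX w hw).elim
      exact ⟨[], rfl, .nil⟩
  | fn f ts ih =>
    rw [maxSubts]
    split
    · exact ⟨[k], by simp, .cons hd .nil⟩
    · next hX =>
      obtain ⟨kf, rfl, hkf⟩ :=
        hstep.exists_hasDerivation_args hR (fun hf => hX (hXD f ts hf)) hd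
      choose Ks hKs hKf using fun i =>
        ih i (fun x hx => hvars x (Tm.count_fn_pos_iff.2 ⟨i, hx⟩)) (hkf i)
      refine ⟨(List.ofFn Ks).flatten, ?_, List.rel_flatten (List.forall₂_ofFn hKf)⟩
      simp [List.sum_flatten, Function.comp_def, hKs, Fin.sum_ofFn]

end IsRewStrategy

section Simulation

variable {R : Set (Tm F ar ℕ × Tm F ar ℕ)}
  {P : Set (Tm (MS F ar) (mar ar) ℕ × Tm (MS F ar) (mar ar) ℕ)}
  {X : Tm F ar ℕ → Prop} {step : Tm F ar ℕ → Tm F ar ℕ → Prop}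

theorem hasDerivation_markT (hR : IsTRS R) (hstep : IsRewStrategy R X step)
    (hXD : ∀ f (ts : Fin (ar f) → Tm F ar ℕ), f ∈ DefinedSym R → X (.fn f ts))
    (hX : ∀ u, X u → RootDV R u)
    (hP : ∀ p ∈ R, (markT p.1, com p ((maxSubts X p.2).map markT)) ∈ P) (m : ℕ) :
    ∀ {f : F} {ts : Fin (ar f) → Tm F ar ℕ}, (∀ i, DefinedSymsUsable R P (ts i)) →
      HasDerivation step m (.fn f ts) →
        HasDerivation (Rew (combined R P)) m (markT (.fn f ts)) := by
  induction m using Nat.strong_induction_on with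
  | _ m IH =>
  intro f ts hts hd
  rcases m with _ | m
  · exact .zero _
  obtain ⟨b, hb, hrest⟩ := hd.uncons
  rcases hstep.root_or_arg hb with
    ⟨l, r, σ, hp, hs, rfl, hvars⟩ | ⟨f', ts', i, t', hs, rfl, hst⟩
  · obtain ⟨f₀, ls, rfl⟩ := hR.exists_lhs_eq_fn hp
    cases hs
    have hσ x (hx : 0 < r.count x) := DefinedSymsUsable.of_rhs_var hR hp hts hx
    obtain ⟨K, rfl, hK⟩ := hstep.exists_hasDerivation_maxSubts hR hXD σ r
      (fun x hx => hvars x (hR.count_pos_lhs hp hx)) hrest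
    refine .cons (rew_markT_fn_subst (hP _ hp) σ) (.com_subst _ _ ?_)
    rw [List.forall₂_map_left_iff]
    refine hK.imp_of_mem fun u hu k hk hdu => ?_
    obtain ⟨hXu, hur⟩ := mem_maxSubts hu
    rcases hX u hXu with ⟨x, rfl⟩ | ⟨g, ws, rfl, -⟩
    · exact hdu.liftT_of_le_rew hR hstep.le_rew
        (hσ x (count_pos_of_reflTransGen_childR hur (by simp [Tm.count])))
    · rw [← markT_fn_subst]
      refine IH k (Nat.lt_succ_of_le (List.le_sum_of_mem hk)) (.args_subst (hP _ hp) ?_ ?_) hdu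
      · exact funcs_subset_com _ (List.mem_map_of_mem hu)
      · exact fun x hx => hσ x (count_pos_of_reflTransGen_childR hur hx)
  · cases hs
    have hR' := hstep.le_rew hst
    exact .cons (rew_markT_fn_update hR hR' (hts i))
      (IH m (by omega) (.forall_update hts ((hts i).rew hR hR')) hrest)

theorem hasDerivation_markT_sub_one (hR : IsTRS R) (hstep : IsRewStrategy R X step)
    (hXD : ∀ f (ts : Fin (ar f) → Tm F ar ℕ), f ∈ DefinedSym R → X (.fn f ts))
    (hX : ∀ u, X u → RootD R u) (hlen : ∀ p ∈ R, (maxSubts X p.2).length ≤ 1)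
    (hP : ∀ p ∈ R, ∀ u ∈ maxSubts X p.2, (markT p.1, markT u) ∈ P) (m : ℕ) :
    ∀ {f : F} {ts : Fin (ar f) → Tm F ar ℕ}, (∀ i, DefinedSymsUsable R P (ts i)) →
      HasDerivation step m (.fn f ts) →
        HasDerivation (Rew (combined R P)) (m - 1) (markT (.fn f ts)) := by
  induction m using Nat.strong_induction_on with
  | _ m IH =>
  intro f ts hts hd
  rcases m with _ | m
  · exact .zero _
  obtain ⟨b, hb, hrest⟩ := hd.uncons
  rcases hstep.root_or_arg hb with
    ⟨l, r, σ, hp, hs, rfl, hvars⟩ | ⟨f', ts', i, t', hs, rfl, hst⟩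
  · obtain ⟨f₀, ls, rfl⟩ := hR.exists_lhs_eq_fn hp
    cases hs
    obtain ⟨K, rfl, hK⟩ := hstep.exists_hasDerivation_maxSubts hR hXD σ r
      (fun x hx => hvars x (hR.count_pos_lhs hp hx)) hrest
    have hlen := hlen _ hp
    rcases hr : maxSubts X r with _ | ⟨u, _ | ⟨v, us⟩⟩
    · rw [hr] at hK
      cases hK
      exact .zero _
    · rw [hr] at hK
      obtain ⟨k, rfl⟩ := List.length_eq_one_iff.1 hK.length_eq.symm
      have hu : u ∈ maxSubts X r := hr ▸ List.mem_singleton_self u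
      obtain ⟨hXu, hur⟩ := mem_maxSubts hu
      obtain ⟨g, ws, rfl, -⟩ := hX u hXu
      have hσ x (hx : 0 < (Tm.fn g ws).count x) :=
        DefinedSymsUsable.of_rhs_var hR hp hts (count_pos_of_reflTransGen_childR hur hx)
      have hg : HasDerivation _ (k - 1) (markT ((Tm.fn g ws).subst σ)) :=
        IH k (by simp) (.args_subst (hP _ hp _ hu) subset_rfl hσ) (List.forall₂_cons.1 hK).1
      rw [markT_fn_subst] at hg
      exact (HasDerivation.cons (rew_markT_fn_subst (hP _ hp _ hu) σ) hg).mono (by simp; omega)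
    · simp [hr] at hlen
  · cases hs
    have hR' := hstep.le_rew hst
    exact (HasDerivation.cons (rew_markT_fn_update hR hR' (hts i))
      (IH m (by omega) (.forall_update hts ((hts i).rew hR hR')) hrest)).mono (by omega)

end Simulation

theorem length_maxSubts_le_one {R : Set (Tm F ar ℕ × Tm F ar ℕ)}
    (hnull : ∀ q ∈ WIDPs R, ∀ p n, MS.comp p n ∈ Tm.funcs q.2 → n = 0) :
    ∀ p ∈ R, (maxSubts (RootD R) p.2).length ≤ 1 := by
  intro p hp
  by_contra! h
  have hne : ((maxSubts (RootD R) p.2).map markT).length ≠ 1 := by simp; omega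
  have := hnull _ ⟨p, hp, rfl⟩ p _ (by rw [com, dif_neg hne]; exact Set.mem_insert _ _)
  rw [List.length_map] at this
  omega

theorem weak_dependency_pairs_general (R : Set (Tm F ar ℕ × Tm F ar ℕ))
    (hTRS : IsTRS R) (t : Tm F ar ℕ) (hbasic : BasicTm R t) :
    ((¬ ∃ d : ℕ → Tm F ar ℕ, d 0 = t ∧ ∀ i, Rew R (d i) (d (i + 1))) →
      ∀ (m : ℕ) (d : ℕ → Tm F ar ℕ), d 0 = t → ChainOf (Rew R) m d →
        ∃ d' : ℕ → Tm (MS F ar) (mar ar) ℕ, d' 0 = markT t ∧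
          ChainOf (Rew (combined R (WDPs R))) m d') ∧
    ((¬ ∃ d : ℕ → Tm F ar ℕ, d 0 = t ∧ ∀ i, IRew R (d i) (d (i + 1))) →
      ∀ (m : ℕ) (d : ℕ → Tm F ar ℕ), d 0 = t → ChainOf (IRew R) m d →
        ∃ d' : ℕ → Tm (MS F ar) (mar ar) ℕ, d' 0 = markT t ∧
          ChainOf (Rew (combined R (WIDPs R))) m d') ∧
    ((∀ q ∈ WIDPs R, ∀ p n, MS.comp p n ∈ Tm.funcs q.2 → n = 0) →
      (¬ ∃ d : ℕ → Tm F ar ℕ, d 0 = t ∧ ∀ i, IRew R (d i) (d (i + 1))) →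
      ∀ (m : ℕ) (d : ℕ → Tm F ar ℕ), d 0 = t → ChainOf (IRew R) m d →
        ∃ m', m - 1 ≤ m' ∧ ∃ d' : ℕ → Tm (MS F ar) (mar ar) ℕ, d' 0 = markT t ∧
          ChainOf (Rew (combined R (DPs R))) m' d') := by
  obtain ⟨f, ts, rfl, -, hts⟩ := hbasic
  have hts' P i : DefinedSymsUsable R P (ts i) := fun g hg hgD => absurd hgD (hts i g hg)
  have hXD f (ts : Fin (ar f) → Tm F ar ℕ) (hf : f ∈ DefinedSym R) : RootD R (.fn f ts) :=
    ⟨f, ts, rfl, hf⟩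
  refine ⟨fun _ m d hd hc => ?_, fun _ m d hd hc => ?_, fun hnull _ m d hd hc => ?_⟩
  · exact hasDerivation_markT (P := WDPs R) hTRS isRewStrategy_rew
      (fun f ts hf => .inr (hXD f ts hf)) (fun _ h => h) (fun p hp => ⟨p, hp, rfl⟩) m (hts' _)
      (ts := ts) ⟨d, hd, hc⟩
  · exact hasDerivation_markT (P := WIDPs R) hTRS (isRewStrategy_iRew hTRS _) hXD
      (fun _ => .inr) (fun p hp => ⟨p, hp, rfl⟩) m (hts' _) (ts := ts) ⟨d, hd, hc⟩
  · refine ⟨m - 1, le_rfl, hasDerivation_markT_sub_one hTRS (isRewStrategy_iRew hTRS _) hXD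
      (fun _ h => h) (length_maxSubts_le_one hnull) (fun p hp u hu => ?_) m (hts' _)
      (ts := ts) ⟨d, hd, hc⟩⟩
    obtain ⟨hu, hur⟩ := mem_maxSubts hu
    exact ⟨p, hp, u, hur, hu, rfl⟩

/-- Let `R` be a finite TRS and `t` a basic term.  Then:
(i) if `t` is `→_R`-terminating, every `→_R`-derivation of length `m` from `t` yields a
`→_{U(WDP(R)) ∪ WDP(R)}`-derivation of length `m` from `t♯`;
(ii) if `t` is `i→_R`-terminating, every `i→_R`-derivation of length `m` from `t`
yields a `→_{U(WIDP(R)) ∪ WIDP(R)}`-derivation of length `m` from `t♯`;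
(iii) if moreover all compound symbols occurring in `WIDP(R)` are nullary, every
`i→_R`-derivation of length `m` from `t` yields a `→_{U(DP(R)) ∪ DP(R)}`-derivation of
length at least `m − 1` from `t♯`. -/
theorem weak_dependency_pairs (R : Set (Tm F ar ℕ × Tm F ar ℕ)) (hfin : R.Finite)
    (hTRS : IsTRS R) (t : Tm F ar ℕ) (hbasic : BasicTm R t) :
    ((¬ ∃ d : ℕ → Tm F ar ℕ, d 0 = t ∧ ∀ i, Rew R (d i) (d (i + 1))) →
      ∀ (m : ℕ) (d : ℕ → Tm F ar ℕ), d 0 = t → ChainOf (Rew R) m d →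
        ∃ d' : ℕ → Tm (MS F ar) (mar ar) ℕ, d' 0 = markT t ∧
          ChainOf (Rew (combined R (WDPs R))) m d') ∧
    ((¬ ∃ d : ℕ → Tm F ar ℕ, d 0 = t ∧ ∀ i, IRew R (d i) (d (i + 1))) →
      ∀ (m : ℕ) (d : ℕ → Tm F ar ℕ), d 0 = t → ChainOf (IRew R) m d →
        ∃ d' : ℕ → Tm (MS F ar) (mar ar) ℕ, d' 0 = markT t ∧
          ChainOf (Rew (combined R (WIDPs R))) m d') ∧
    ((∀ q ∈ WIDPs R, ∀ p n, MS.comp p n ∈ Tm.funcs q.2 → n = 0) →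
      (¬ ∃ d : ℕ → Tm F ar ℕ, d 0 = t ∧ ∀ i, IRew R (d i) (d (i + 1))) →
      ∀ (m : ℕ) (d : ℕ → Tm F ar ℕ), d 0 = t → ChainOf (IRew R) m d →
        ∃ m', m - 1 ≤ m' ∧ ∃ d' : ℕ → Tm (MS F ar) (mar ar) ℕ, d' 0 = markT t ∧
          ChainOf (Rew (combined R (DPs R))) m' d') :=
  weak_dependency_pairs_general R hTRS t hbasic
end
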